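/- arXiv:2105.01349 — 2 statements merged into one kernel-verified Lean document; each statement's English description precedes it below -/
import Mathlib

section
/- Vanishing of wave tails at +∞ (claim (3.8)). Let (φ, ψ) be any pair of C¹, bounded, nonnegative functions solving the wave-profile system (TWS) on all of ℝ. Then φ(z) → 0 and ψ(z) → 0 as z → +∞. -/
open MeasureTheory Filter Topology

def KernelGood (J : ℝ → ℝ) : Prop :=
  Continuous J ∧ (∀ y, 0 ≤ J y) ∧ HasCompactSupport J ∧
    (∫ y : ℝ, J y) = 1 ∧ (∀ y, J (-y) = J y)

def AlphaGood (α : ℝ → ℝ) : Prop :=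
  Continuous α ∧ Monotone α ∧
    (∃ L : ℝ, L < 0 ∧ Tendsto α atBot (nhds L)) ∧
    Tendsto α atTop (nhds 1)

/-- The wave-profile system (TWS): `φ, ψ` are C¹, bounded, and satisfy the
nonlocal profile equations on all of ℝ. -/
def IsTWS (d₁ d₂ r₁ r₂ a b s : ℝ) (J₁ J₂ α φ ψ : ℝ → ℝ) : Prop :=
  ContDiff ℝ 1 φ ∧ ContDiff ℝ 1 ψ ∧
  (∃ M : ℝ, ∀ z, |φ z| ≤ M) ∧ (∃ M : ℝ, ∀ z, |ψ z| ≤ M) ∧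
  (∀ z : ℝ, s * deriv φ z =
    d₁ * ((∫ y : ℝ, J₁ (z - y) * φ y) - φ z) +
      r₁ * φ z * (α (-z) - φ z - a * ψ z)) ∧
  (∀ z : ℝ, s * deriv ψ z =
    d₂ * ((∫ y : ℝ, J₂ (z - y) * ψ y) - ψ z) +
      r₂ * ψ z * (-1 + b * φ z - ψ z))

/-! Both components satisfy a scalar inequality `s f' ≤ d (J * f - f) - μ f` near `+∞`, with
`μ > 0`: for `φ` because `α(-z) < 0` there, and then for `ψ` because `b φ → 0`. If such an `f ≥ 0`
had `m = limsup f > 0`, then far out `J * f ≤ m + ε`, so `f' ≤ -c < 0` wherever `f ≥ m - ε`;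
hence `f` eventually stays below `m - ε`, contradicting the definition of `m`. -/

open Set

theorem eventually_le_of_deriv_le_neg {f : ℝ → ℝ} {θ c : ℝ} (hf : Differentiable ℝ f)
    (hc : 0 < c) (H : ∀ᶠ z in atTop, θ ≤ f z → deriv f z ≤ -c) :
    ∀ᶠ z in atTop, f z ≤ θ := by
  obtain ⟨Z, hZ⟩ := eventually_atTop.1 H
  have hf' : ∀ x, HasDerivWithinAt f (deriv f x) (Ici x) x :=
    fun x => (hf x).hasDerivAt.hasDerivWithinAt
  -- Otherwise `f ≥ θ` on `[Z, ∞)`, where it then decreases at rate at least `c`.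
  obtain ⟨z₀, hz₀Z, hz₀⟩ : ∃ z₀, Z ≤ z₀ ∧ f z₀ < θ := by
    by_contra! habove
    set T := (f Z - θ + 1) / c
    have hT : 0 ≤ T := div_nonneg (by linarith [habove Z le_rfl]) hc.le
    have hdecay : f (Z + T) ≤ f Z - c * (Z + T - Z) :=
      image_le_of_deriv_right_le_deriv_boundary hf.continuous.continuousOn (fun x _ => hf' x)
        (B := fun x => f Z - c * (x - Z)) (B' := fun _ => -c) (by simp) (by fun_prop)
        (fun x _ => by
          simpa using
            ((((hasDerivAt_id x).sub_const Z).const_mul c).const_sub (f Z)).hasDerivWithinAt)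
        (fun x hx => hZ x hx.1 (habove x hx.1)) (b := Z + T) ⟨by linarith, le_rfl⟩
    have hcT : c * (Z + T - Z) = f Z - θ + 1 := by
      simp only [T, add_sub_cancel_left]; field_simp
    linarith [habove (Z + T) (by linarith)]
  filter_upwards [eventually_ge_atTop z₀] with z hz
  exact image_le_of_deriv_right_lt_deriv_boundary' (B := fun _ => θ) (B' := fun _ => 0)
    hf.continuous.continuousOn (fun x _ => hf' x) hz₀.le continuousOn_const
    (fun x _ => hasDerivWithinAt_const x _ θ)
    (fun x hx hfx => (hZ x (hz₀Z.trans hx.1) hfx.ge).trans_lt (neg_neg_of_pos hc)) ⟨hz, le_rfl⟩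

theorem eventually_integral_kernel_mul_le {J f : ℝ → ℝ} {K : ℝ} (hJ : Continuous J)
    (hJ_nonneg : ∀ y, 0 ≤ J y) (hJ_supp : HasCompactSupport J) (hJ_int : ∫ y, J y = 1)
    (hf : Continuous f) (hfK : ∀ᶠ y in atTop, f y ≤ K) :
    ∀ᶠ z in atTop, ∫ y, J (z - y) * f y ≤ K := by
  obtain ⟨R, hR⟩ := hJ_supp.isBounded.subset_closedBall 0
  obtain ⟨Z, hZ⟩ := eventually_atTop.1 hfK
  filter_upwards [eventually_ge_atTop (Z + R)] with z hz
  have hint : ∀ g : ℝ → ℝ, Continuous g → Integrable fun y => J (z - y) * g y := fun g hg =>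
    ((hJ.comp (continuous_const.sub continuous_id)).mul hg).integrable_of_hasCompactSupport
      (hJ_supp.comp_homeomorph (Homeomorph.subLeft z)).mul_right
  calc ∫ y, J (z - y) * f y ≤ ∫ y, J (z - y) * K :=
        integral_mono (hint f hf) (hint _ continuous_const) fun y => ?_
    _ = K := by rw [integral_mul_const, integral_sub_left_eq_self J volume z, hJ_int, one_mul]
  rcases eq_or_ne (J (z - y)) 0 with h | h
  · simp [h]
  · have hzy := hR (subset_tsupport J h)
    rw [Metric.mem_closedBall, Real.dist_eq, sub_zero] at hzy
    exact mul_le_mul_of_nonneg_left (hZ y (by linarith [(abs_le.1 hzy).2])) (hJ_nonneg _)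

theorem tendsto_zero_of_deriv_le_kernel_sub {J f : ℝ → ℝ} {d μ s : ℝ} (hd : 0 ≤ d) (hμ : 0 < μ)
    (hs : 0 < s) (hJ : Continuous J) (hJ_nonneg : ∀ y, 0 ≤ J y) (hJ_supp : HasCompactSupport J)
    (hJ_int : ∫ y, J y = 1) (hf : Differentiable ℝ f) (hf_nonneg : ∀ z, 0 ≤ f z)
    (hf_bdd : BddAbove (range f))
    (hf_deriv : ∀ᶠ z in atTop, s * deriv f z ≤ d * ((∫ y, J (z - y) * f y) - f z) - μ * f z) :
    Tendsto f atTop (𝓝 0) := by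
  set m := limsup f atTop
  have hbdd : IsBoundedUnder (· ≤ ·) atTop f := hf_bdd.isBoundedUnder_of_range
  suffices hm : m ≤ 0 from tendsto_order.2
    ⟨fun a ha => .of_forall fun z => ha.trans_le (hf_nonneg z),
      fun a ha => eventually_lt_of_limsup_lt (hm.trans_lt ha) hbdd⟩
  by_contra! hm
  -- `ε` is chosen so that `2 d ε - μ (m - ε) = -μ m / 2`.
  set ε := μ * m / (2 * (2 * d + μ))
  have hε : ε * (2 * d + μ) = μ * m / 2 := by simp only [ε]; field_simp
  have hε_pos : 0 < ε := by positivity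
  have hconv : ∀ᶠ z in atTop, ∫ y, J (z - y) * f y ≤ m + ε :=
    eventually_integral_kernel_mul_le hJ hJ_nonneg hJ_supp hJ_int hf.continuous
      ((eventually_lt_of_limsup_lt (by linarith) hbdd).mono fun _ => le_of_lt)
  have hdrop : ∀ᶠ z in atTop, m - ε ≤ f z → deriv f z ≤ -(μ * m / (2 * s)) := by
    filter_upwards [hf_deriv, hconv] with z hz hJz hfz
    have : s * deriv f z ≤ -(μ * m / 2) := by
      nlinarith [mul_le_mul_of_nonneg_left (by linarith : (∫ y, J (z - y) * f y) - f z ≤ 2 * ε) hd,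
        mul_le_mul_of_nonneg_left hfz hμ.le]
    rw [neg_div' .., le_div_iff₀ (by positivity)]
    linarith
  have hbelow := eventually_le_of_deriv_le_neg hf (by positivity) hdrop
  linarith [limsup_le_of_le (isCoboundedUnder_le_of_le atTop hf_nonneg) hbelow]

theorem wave_tails_vanish_at_top_general
    (d₁ d₂ r₁ r₂ a b s : ℝ)
    (hd₁ : 0 < d₁) (hd₂ : 0 < d₂) (hr₁ : 0 < r₁) (hr₂ : 0 < r₂)
    (ha : 0 < a) (hs : 0 < s)
    (J₁ J₂ α : ℝ → ℝ)
    (hJ₁ : KernelGood J₁) (hJ₂ : KernelGood J₂) (hα : AlphaGood α)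
    (φ ψ : ℝ → ℝ)
    (htws : IsTWS d₁ d₂ r₁ r₂ a b s J₁ J₂ α φ ψ)
    (hφ : ∀ z, 0 ≤ φ z) (hψ : ∀ z, 0 ≤ ψ z) :
    Tendsto φ atTop (nhds 0) ∧ Tendsto ψ atTop (nhds 0) := by
  obtain ⟨hφC, hψC, ⟨M₁, hM₁⟩, ⟨M₂, hM₂⟩, hφ_eq, hψ_eq⟩ := htws
  obtain ⟨hJ₁c, hJ₁_nonneg, hJ₁_supp, hJ₁_int, -⟩ := hJ₁
  obtain ⟨hJ₂c, hJ₂_nonneg, hJ₂_supp, hJ₂_int, -⟩ := hJ₂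
  obtain ⟨-, -, ⟨L, hL, hαL⟩, -⟩ := hα
  have hα_neg : ∀ᶠ z in atTop, α (-z) ≤ L / 2 :=
    tendsto_neg_atTop_atBot.eventually (hαL.eventually_le_const (by linarith))
  have hφ_lim : Tendsto φ atTop (𝓝 0) := by
    refine tendsto_zero_of_deriv_le_kernel_sub hd₁.le (μ := -(r₁ * (L / 2))) (by nlinarith) hs
      hJ₁c hJ₁_nonneg hJ₁_supp hJ₁_int (hφC.differentiable one_ne_zero) hφ
      ⟨M₁, forall_mem_range.2 fun z => le_of_abs_le (hM₁ z)⟩ ?_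
    filter_upwards [hα_neg] with z hz
    rw [hφ_eq z]
    nlinarith [mul_le_mul_of_nonneg_left (by nlinarith [hφ z, hψ z] :
      α (-z) - φ z - a * ψ z ≤ L / 2) (mul_nonneg hr₁.le (hφ z))]
  have hbφ : ∀ᶠ z in atTop, b * φ z ≤ 1 / 2 := by
    simpa using (hφ_lim.const_mul b).eventually_le_const (by norm_num : b * 0 < 1 / 2)
  have hψ_lim : Tendsto ψ atTop (𝓝 0) := by
    refine tendsto_zero_of_deriv_le_kernel_sub hd₂.le (μ := r₂ / 2) (by positivity) hs
      hJ₂c hJ₂_nonneg hJ₂_supp hJ₂_int (hψC.differentiable one_ne_zero) hψ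
      ⟨M₂, forall_mem_range.2 fun z => le_of_abs_le (hM₂ z)⟩ ?_
    filter_upwards [hbφ] with z hz
    rw [hψ_eq z]
    nlinarith [mul_le_mul_of_nonneg_left (by nlinarith [hψ z] : -1 + b * φ z - ψ z ≤ -(1 / 2))
      (mul_nonneg hr₂.le (hψ z))]
  exact ⟨hφ_lim, hψ_lim⟩

/-- Claim (3.8): vanishing of wave tails at +∞ for any nonnegative bounded
C¹ solution of (TWS). -/
theorem wave_tails_vanish_at_top
    (d₁ d₂ r₁ r₂ a b s : ℝ)
    (hd₁ : 0 < d₁) (hd₂ : 0 < d₂) (hr₁ : 0 < r₁) (hr₂ : 0 < r₂)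
    (ha : 0 < a) (hb : 1 < b) (hs : 0 < s)
    (J₁ J₂ α : ℝ → ℝ)
    (hJ₁ : KernelGood J₁) (hJ₂ : KernelGood J₂) (hα : AlphaGood α)
    (φ ψ : ℝ → ℝ)
    (htws : IsTWS d₁ d₂ r₁ r₂ a b s J₁ J₂ α φ ψ)
    (hφ : ∀ z, 0 ≤ φ z) (hψ : ∀ z, 0 ≤ ψ z) :
    Tendsto φ atTop (nhds 0) ∧ Tendsto ψ atTop (nhds 0) :=
  wave_tails_vanish_at_top_general d₁ d₂ r₁ r₂ a b s hd₁ hd₂ hr₁ hr₂ ha hs J₁ J₂ α hJ₁ hJ₂ hα φ ψ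
    htws hφ hψ
end

section
/- Extinction under fast climate change, nonlocal case (Theorem 4.1). Assume b > 1. Let u₀, v₀ be continuous with 0 ≤ u₀ ≤ 1, 0 ≤ v₀ ≤ b−1, both not identically zero and both compactly supported, and let (u, v) be a solution of the nonlocal Cauchy problem with these initial data. If s > s*, then sup_{x∈ℝ} u(x,t) → 0 as t → +∞; if s > s_*, then sup_{x∈ℝ} v(x,t) → 0 as t → +∞. -/
open MeasureTheory Filter Topology

noncomputable def minSpeed (d r : ℝ) (J : ℝ → ℝ) : ℝ :=
  sInf {c : ℝ | ∃ l : ℝ, 0 < l ∧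
    c = (d * ((∫ y : ℝ, J y * Real.exp (l * y)) - 1) + r) / l}

/-- A solution of the nonlocal Cauchy problem (pp) with initial data `(u₀, v₀)`:
bounded continuous on ℝ × [0,∞), satisfying the equations pointwise for t > 0,
with 0 ≤ u ≤ 1 and 0 ≤ v ≤ b-1. -/
def IsSolPP (d₁ d₂ r₁ r₂ a b s : ℝ) (J₁ J₂ α : ℝ → ℝ) (u₀ v₀ : ℝ → ℝ)
    (u v : ℝ → ℝ → ℝ) : Prop :=
  ContinuousOn (fun p : ℝ × ℝ => u p.1 p.2) (Set.univ ×ˢ Set.Ici (0:ℝ)) ∧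
  ContinuousOn (fun p : ℝ × ℝ => v p.1 p.2) (Set.univ ×ˢ Set.Ici (0:ℝ)) ∧
  (∀ x t : ℝ, 0 ≤ t → 0 ≤ u x t ∧ u x t ≤ 1) ∧
  (∀ x t : ℝ, 0 ≤ t → 0 ≤ v x t ∧ v x t ≤ b - 1) ∧
  (∀ x : ℝ, u x 0 = u₀ x) ∧ (∀ x : ℝ, v x 0 = v₀ x) ∧
  (∀ x t : ℝ, 0 < t → HasDerivAt (fun τ => u x τ)
    (d₁ * ((∫ y : ℝ, J₁ (x - y) * u y t) - u x t) +
      r₁ * u x t * (α (x - s * t) - u x t - a * v x t)) t) ∧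
  (∀ x t : ℝ, 0 < t → HasDerivAt (fun τ => v x τ)
    (d₂ * ((∫ y : ℝ, J₂ (x - y) * v y t) - v x t) +
      r₂ * v x t * (-1 + b * u x t - v x t)) t)

/-!
Ahead of the climate edge a species spreads no faster than the linearised equation
`∂ₜ w = d (J * w - w) + r w`, whose travelling exponentials `A e^{-l (x - c t)}` with
`d (M(l) - 1) + r = l c`, `M(l) = ∫ J(y) e^{l y} dy`, are supersolutions; `minSpeed d r J < s`
provides one with `c < s`. The comparison principle for the nonlocal operator is proved slab by
slab in time, since on a slab of length `δ` a lower bound `-M` improves to `-d δ M`.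

Behind the edge the growth rate is negative: for the prey because `α < 0` far behind, for the
predator because the prey has already died out there. Relaxing in time steps, the density then
becomes uniformly small at a fixed distance behind the edge. As the edge moves at speed `s > c`,
the two regions cover the whole line for large times.
-/

open Set Real

lemma HasCompactSupport.exists_eq_zero_of_lt_abs {f : ℝ → ℝ} (hf : HasCompactSupport f) :
    ∃ R, 0 ≤ R ∧ ∀ y, R < |y| → f y = 0 := by
  obtain ⟨R, hR⟩ := hf.isBounded.subset_closedBall 0
  refine ⟨max R 0, le_max_right _ _, fun y hy => image_eq_zero_of_notMem_tsupport fun hy' => ?_⟩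
  have : |y| ≤ R := by simpa using hR hy'
  exact (this.trans (le_max_left R 0)).not_gt hy

lemma HasCompactSupport.exists_le_mul_exp_neg {f : ℝ → ℝ} (hf : HasCompactSupport f) {W : ℝ}
    (hW : ∀ x, f x ≤ W) {l : ℝ} (hl : 0 ≤ l) :
    ∃ A, 0 ≤ A ∧ ∀ x, f x ≤ A * exp (-(l * x)) := by
  obtain ⟨R, -, hR⟩ := hf.exists_eq_zero_of_lt_abs
  refine ⟨|W| * exp (l * R), by positivity, fun x => ?_⟩
  rcases le_or_gt |x| R with hx | hx
  · calc f x ≤ |W| := (hW x).trans (le_abs_self W)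
      _ ≤ |W| * exp (l * (R - x)) :=
        le_mul_of_one_le_right (abs_nonneg W)
          (one_le_exp (mul_nonneg hl (by linarith [le_abs_self x])))
      _ = |W| * exp (l * R) * exp (-(l * x)) := by rw [mul_assoc, ← exp_add]; ring_nf
  · rw [hR x hx]; positivity

lemma integral_comp_sub_mul_exp_neg (J : ℝ → ℝ) (l a x : ℝ) :
    ∫ y, J (x - y) * exp (-(l * (y - a))) =
      (∫ y, J y * exp (l * y)) * exp (-(l * (x - a))) := by
  rw [← integral_sub_left_eq_self _ volume x, ← integral_mul_const]
  congr 1 with y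
  rw [sub_sub_cancel, mul_assoc, ← exp_add]
  ring_nf

lemma eventually_mul_exp_neg_le (A : ℝ) {b ε : ℝ} (hb : 0 < b) (hε : 0 < ε) :
    ∀ᶠ t in atTop, A * exp (-(b * t)) ≤ ε := by
  have h : Tendsto (fun t => A * exp (-(b * t))) atTop (𝓝 (A * 0)) :=
    (tendsto_exp_atBot.comp (tendsto_neg_atTop_atBot.comp
      (tendsto_id.const_mul_atTop hb))).const_mul A
  rw [mul_zero] at h
  exact h.eventually (ge_mem_nhds hε)

namespace KernelGood

variable {J : ℝ → ℝ} (hJ : KernelGood J)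
include hJ

lemma integrable_mul {f : ℝ → ℝ} (hf : Continuous f) (x : ℝ) :
    Integrable (fun y => J (x - y) * f y) := by
  obtain ⟨hJc, -, hJs, -, -⟩ := hJ
  exact ((hJc.comp (continuous_const.sub continuous_id)).mul hf).integrable_of_hasCompactSupport
    (hJs.comp_homeomorph (Homeomorph.subLeft x)).mul_right

lemma integral_comp_sub_mul_const (x C : ℝ) : ∫ y, J (x - y) * C = C := by
  rw [integral_mul_const, integral_sub_left_eq_self J volume x, hJ.2.2.2.1, one_mul]

lemma integral_mul_le {f : ℝ → ℝ} (hf : Continuous f) {x C : ℝ}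
    (hC : ∀ y, J (x - y) ≠ 0 → f y ≤ C) : ∫ y, J (x - y) * f y ≤ C := by
  calc ∫ y, J (x - y) * f y ≤ ∫ y, J (x - y) * C :=
        integral_mono (hJ.integrable_mul hf x) (hJ.integrable_mul continuous_const x) fun y => ?_
    _ = C := hJ.integral_comp_sub_mul_const x C
  by_cases hy : J (x - y) = 0
  · simp [hy]
  · exact mul_le_mul_of_nonneg_left (hC y hy) (hJ.2.1 _)

lemma le_integral_mul {f : ℝ → ℝ} (hf : Continuous f) {x C : ℝ} (hC : ∀ y, C ≤ f y) :
    C ≤ ∫ y, J (x - y) * f y :=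
  calc C = ∫ y, J (x - y) * C := (hJ.integral_comp_sub_mul_const x C).symm
    _ ≤ ∫ y, J (x - y) * f y :=
      integral_mono (hJ.integrable_mul continuous_const x) (hJ.integrable_mul hf x) fun y =>
        mul_le_mul_of_nonneg_left (hC y) (hJ.2.1 _)

lemma one_le_integral_mul_exp (l : ℝ) : 1 ≤ ∫ y, J y * exp (l * y) := by
  obtain ⟨hJc, hJ₀, hJs, hJ₁, hJeven⟩ := hJ
  have hint : ∀ g : ℝ → ℝ, Continuous g → Integrable (fun y => J y * g y) := fun g hg =>
    (hJc.mul hg).integrable_of_hasCompactSupport hJs.mul_right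
  have hcont : Continuous fun y => l * y := continuous_const.mul continuous_id
  have hsymm : ∫ y, J y * exp (-(l * y)) = ∫ y, J y * exp (l * y) := by
    rw [← integral_neg_eq_self]
    simp only [hJeven, mul_neg, neg_neg]
  have hcosh : ∫ y, J y * cosh (l * y) = ∫ y, J y * exp (l * y) := by
    simp only [cosh_eq, mul_div_assoc', mul_add]
    rw [integral_div,
      integral_add (hint _ hcont.rexp) (hint (fun y => exp (-(l * y))) hcont.neg.rexp), hsymm]
    ring
  calc (1 : ℝ) = ∫ y, J y * 1 := by simpa using hJ₁.symm
    _ ≤ ∫ y, J y * cosh (l * y) :=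
      integral_mono (hint _ continuous_const) (hint _ (continuous_cosh.comp hcont)) fun y =>
        mul_le_mul_of_nonneg_left (one_le_cosh _) (hJ₀ y)
    _ = ∫ y, J y * exp (l * y) := hcosh

end KernelGood

lemma exists_lt_of_minSpeed_lt {d r s : ℝ} {J : ℝ → ℝ} (hJ : KernelGood J) (hd : 0 ≤ d)
    (hr : 0 ≤ r) (hs : minSpeed d r J < s) :
    ∃ l c, 0 < l ∧ c < s ∧ d * ((∫ y, J y * exp (l * y)) - 1) + r = l * c := by
  have hnum : ∀ l, 0 ≤ d * ((∫ y, J y * exp (l * y)) - 1) + r := fun l =>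
    add_nonneg (mul_nonneg hd (sub_nonneg.2 (hJ.one_le_integral_mul_exp l))) hr
  rw [minSpeed, csInf_lt_iff] at hs
  · obtain ⟨c, ⟨l, hl, rfl⟩, hcs⟩ := hs
    exact ⟨l, _, hl, hcs, by field_simp⟩
  · exact ⟨0, by rintro _ ⟨l, hl, rfl⟩; exact div_nonneg (hnum l) hl.le⟩
  · exact ⟨_, 1, one_pos, rfl⟩

section Comparison

variable {d : ℝ} {J : ℝ → ℝ} {z z' : ℝ → ℝ → ℝ} (hJ : KernelGood J) (hd : 0 ≤ d)
  (hz_x : ∀ t, 0 < t → Continuous (z · t)) (hz_t : ∀ x, ContinuousOn (z x) (Ici 0))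
  (hz' : ∀ x t, 0 < t → HasDerivAt (z x) (z' x t) t)
  (hsuper : ∀ x t, 0 < t → d * ∫ y, J (x - y) * z y t ≤ z' x t)
include hJ hd hz_x hz_t hz' hsuper

/-- The nonlocal term pulls `z` down at rate at most `d M`. -/
lemma neg_mul_le_of_mem_slab {T₀ δ M : ℝ} (hT₀ : 0 ≤ T₀) (hM : 0 ≤ M) (h₀ : ∀ x, 0 ≤ z x T₀)
    (hlow : ∀ x, ∀ t ∈ Icc T₀ (T₀ + δ), -M ≤ z x t) :
    ∀ x, ∀ t ∈ Icc T₀ (T₀ + δ), -(d * δ * M) ≤ z x t := by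
  intro x t ht
  have hmono : MonotoneOn (fun τ => z x τ + d * M * τ) (Icc T₀ (T₀ + δ)) := by
    refine monotoneOn_of_hasDerivWithinAt_nonneg (f' := fun τ => z' x τ + d * M) (convex_Icc _ _)
      (((hz_t x).mono fun τ hτ => hT₀.trans hτ.1).add (continuousOn_const.mul continuousOn_id))
      (fun τ hτ => ?_) fun τ hτ => ?_ <;> rw [interior_Icc] at hτ
    · have hlin := (hasDerivAt_id' τ).const_mul (d * M)
      rw [mul_one] at hlin
      exact ((hz' x τ (hT₀.trans_lt hτ.1)).add hlin).hasDerivWithinAt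
    · have hτ₀ : 0 < τ := hT₀.trans_lt hτ.1
      have hJz := hJ.le_integral_mul (hz_x τ hτ₀) (x := x) fun y => hlow y τ ⟨hτ.1.le, hτ.2.le⟩
      nlinarith [hsuper x τ hτ₀]
  have := hmono ⟨le_rfl, ht.1.trans ht.2⟩ ht ht.1
  nlinarith [h₀ x,
    mul_le_mul_of_nonneg_left (show t - T₀ ≤ δ by linarith [ht.2]) (mul_nonneg hd hM)]

lemma nonneg_of_mem_slab {T₀ δ B : ℝ} (hT₀ : 0 ≤ T₀) (hδ : 0 ≤ δ) (hdδ : d * δ < 1)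
    (h₀ : ∀ x, 0 ≤ z x T₀) (hB : ∀ x, ∀ t ∈ Icc T₀ (T₀ + δ), -B ≤ z x t) :
    ∀ x, ∀ t ∈ Icc T₀ (T₀ + δ), 0 ≤ z x t := by
  have hpow : ∀ n : ℕ, ∀ x, ∀ t ∈ Icc T₀ (T₀ + δ), -((d * δ) ^ n * max B 0) ≤ z x t := by
    intro n
    induction n with
    | zero => simpa using fun x t ht => (neg_le_neg (le_max_left B 0)).trans (hB x t ht)
    | succ n ih =>
      intro x t ht
      exact le_of_eq_of_le (by ring)
        (neg_mul_le_of_mem_slab hJ hd hz_x hz_t hz' hsuper hT₀ (by positivity) h₀ ih x t ht)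
  intro x t ht
  have hlim : Tendsto (fun n : ℕ => -((d * δ) ^ n * max B 0)) atTop (𝓝 (-(0 * max B 0))) :=
    ((tendsto_pow_atTop_nhds_zero_of_lt_one (mul_nonneg hd hδ) hdδ).mul_const _).neg
  simpa using le_of_tendsto' hlim fun n => hpow n x t ht

/-- Slabs of length `1 / (d + 1)` make `neg_mul_le_of_mem_slab` a contraction. -/
lemma nonneg_of_integral_le_deriv (hbdd : ∀ T, ∃ B, ∀ x, ∀ t ∈ Icc 0 T, -B ≤ z x t)
    (h₀ : ∀ x, 0 ≤ z x 0) : ∀ x t, 0 ≤ t → 0 ≤ z x t := by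
  set δ : ℝ := 1 / (d + 1) with hδ_def
  have hδ : 0 < δ := by positivity
  have hdδ : d * δ < 1 := by rw [hδ_def, mul_one_div, div_lt_one (by linarith)]; linarith
  have hslab : ∀ k : ℕ, (∀ x, 0 ≤ z x (k * δ)) →
      ∀ x, ∀ t ∈ Icc (k * δ) (k * δ + δ), 0 ≤ z x t := by
    intro k hk
    obtain ⟨B, hB⟩ := hbdd (k * δ + δ)
    exact nonneg_of_mem_slab hJ hd hz_x hz_t hz' hsuper (by positivity) hδ.le hdδ hk
      fun x t ht => hB x t ⟨(by positivity : (0 : ℝ) ≤ k * δ).trans ht.1, ht.2⟩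
  have hgrid : ∀ k : ℕ, ∀ x, 0 ≤ z x (k * δ) := by
    intro k
    induction k with
    | zero => simpa using h₀
    | succ k ih =>
      intro x
      simpa [add_mul] using hslab k ih x (k * δ + δ) ⟨by linarith, le_rfl⟩
  intro x t ht
  have hk := Nat.floor_le (div_nonneg ht hδ.le)
  have hk' := Nat.lt_floor_add_one (t / δ)
  rw [le_div_iff₀ hδ] at hk
  rw [div_lt_iff₀ hδ] at hk'
  exact hslab ⌊t / δ⌋₊ (hgrid _) x t ⟨hk, by linarith⟩

end Comparison

lemma nonneg_of_supersolution {d r B : ℝ} {J : ℝ → ℝ} {w w' : ℝ → ℝ → ℝ} (hJ : KernelGood J)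
    (hd : 0 ≤ d) (hw_x : ∀ t, 0 < t → Continuous (w · t))
    (hw_t : ∀ x, ContinuousOn (w x) (Ici 0)) (hw' : ∀ x t, 0 < t → HasDerivAt (w x) (w' x t) t)
    (hsuper : ∀ x t, 0 < t → d * ((∫ y, J (x - y) * w y t) - w x t) + r * w x t ≤ w' x t)
    (hB : ∀ x t, 0 ≤ t → -B ≤ w x t) (h₀ : ∀ x, 0 ≤ w x 0) :
    ∀ x t, 0 ≤ t → 0 ≤ w x t := by
  -- the weight `e^{(d - r) t}` absorbs the local terms
  have hz := nonneg_of_integral_le_deriv (z := fun x t => exp ((d - r) * t) * w x t)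
    (z' := fun x t => (d - r) * exp ((d - r) * t) * w x t + exp ((d - r) * t) * w' x t) hJ hd
    (fun t ht => continuous_const.mul (hw_x t ht))
    (fun x => (continuous_const.mul continuous_id).rexp.continuousOn.mul (hw_t x))
    (fun x t ht => ((((hasDerivAt_id' t).const_mul (d - r)).exp).mul (hw' x t ht)).congr_deriv
      (by ring))
    (fun x t ht => by
      simp_rw [mul_left_comm _ (exp _), integral_const_mul]
      nlinarith [hsuper x t ht, exp_pos ((d - r) * t)])
    (fun T => ⟨exp (|d - r| * T) * max B 0, fun x t ht => ?_⟩) (by simpa using h₀)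
  · exact fun x t ht => (mul_nonneg_iff_of_pos_left (exp_pos _)).1 (hz x t ht)
  · have hexp : exp ((d - r) * t) ≤ exp (|d - r| * T) :=
      exp_le_exp.2 (mul_le_mul (le_abs_self _) ht.2 ht.1 (abs_nonneg _))
    have hw : -max B 0 ≤ w x t := (neg_le_neg (le_max_left B 0)).trans (hB x t ht.1)
    nlinarith [exp_pos ((d - r) * t), le_max_right B 0]

/-- `A e^{-l (x - c t)}` solves `∂ₜ φ = d (J * φ - φ) + r φ` exactly when
`d (M(l) - 1) + r = l c`. -/
lemma le_mul_exp_of_subsolution {d r l c A W : ℝ} {J : ℝ → ℝ} {u u' : ℝ → ℝ → ℝ}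
    (hJ : KernelGood J) (hd : 0 ≤ d) (hc : d * ((∫ y, J y * exp (l * y)) - 1) + r = l * c)
    (hA : 0 ≤ A) (hu_x : ∀ t, 0 < t → Continuous (u · t))
    (hu_t : ∀ x, ContinuousOn (u x) (Ici 0)) (hu' : ∀ x t, 0 < t → HasDerivAt (u x) (u' x t) t)
    (hsub : ∀ x t, 0 < t → u' x t ≤ d * ((∫ y, J (x - y) * u y t) - u x t) + r * u x t)
    (hW : ∀ x t, 0 ≤ t → u x t ≤ W) (h₀ : ∀ x, u x 0 ≤ A * exp (-(l * x))) :
    ∀ x t, 0 ≤ t → u x t ≤ A * exp (-(l * (x - c * t))) := by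
  set φ : ℝ → ℝ → ℝ := fun x t => A * exp (-(l * (x - c * t))) with hφ
  have hφ_x : ∀ t, Continuous (φ · t) := fun t =>
    continuous_const.mul (continuous_const.mul (continuous_id.sub continuous_const)).neg.rexp
  have hφ' : ∀ x t, HasDerivAt (φ x) (l * c * φ x t) t := fun x t => by
    refine ((((hasDerivAt_id' t).const_mul c).const_sub x |>.const_mul l |>.neg |>.exp).const_mul
      A).congr_deriv ?_
    simp only [hφ, Pi.neg_apply]
    ring
  have hJφ : ∀ x t, ∫ y, J (x - y) * φ y t = (∫ y, J y * exp (l * y)) * φ x t := fun x t => by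
    simp_rw [hφ, mul_left_comm _ A, integral_const_mul, integral_comp_sub_mul_exp_neg]
  have hw := nonneg_of_supersolution (w := fun x t => φ x t - u x t) (r := r) (B := W) hJ hd
    (fun t ht => (hφ_x t).sub (hu_x t ht))
    (fun x => (HasDerivAt.continuousOn fun t _ => hφ' x t).sub (hu_t x))
    (fun x t ht => (hφ' x t).sub (hu' x t ht)) (fun x t ht => ?_)
    (fun x t ht => by nlinarith [hW x t ht, exp_pos (-(l * (x - c * t)))])
    (fun x => by simpa [hφ] using h₀ x)
  · exact fun x t ht => sub_nonneg.1 (hw x t ht)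
  · simp_rw [mul_sub]
    rw [integral_sub (hJ.integrable_mul (hφ_x t) x) (hJ.integrable_mul (hu_x t ht) x), hJφ]
    linear_combination hsub x t ht + φ x t * hc

lemma sub_le_mul_exp_of_hasDerivAt {f f' : ℝ → ℝ} {a b μ m : ℝ} (hab : a ≤ b)
    (hf : ∀ t ∈ Icc a b, HasDerivAt f (f' t) t) (hf' : ∀ t ∈ Icc a b, f' t ≤ μ * (m - f t)) :
    f b - m ≤ (f a - m) * exp (-(μ * (b - a))) := by
  have hanti : AntitoneOn (fun t => (f t - m) * exp (μ * t)) (Icc a b) := by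
    refine antitoneOn_of_hasDerivWithinAt_nonpos (convex_Icc a b)
      (f' := fun t => (f' t - μ * (m - f t)) * exp (μ * t))
      (HasDerivAt.continuousOn fun t ht =>
        ((hf t ht).sub_const m).mul ((hasDerivAt_id' t).const_mul μ).exp) (fun t ht => ?_)
      fun t ht => ?_ <;> rw [interior_Icc] at ht
    · exact (((hf t (Ioo_subset_Icc_self ht)).sub_const m).mul
        ((hasDerivAt_id' t).const_mul μ).exp).hasDerivWithinAt.congr_deriv (by ring)
    · exact mul_nonpos_of_nonpos_of_nonneg (by linarith [hf' t (Ioo_subset_Icc_self ht)])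
        (exp_pos _).le
  have := hanti ⟨le_rfl, hab⟩ ⟨hab, le_rfl⟩ hab
  rw [← le_div_iff₀ (exp_pos _), mul_div_assoc, ← exp_sub] at this
  rwa [show -(μ * (b - a)) = μ * a - μ * b by ring]

section Hostile

variable {d κ : ℝ} {J : ℝ → ℝ} {u u' : ℝ → ℝ → ℝ} (hJ : KernelGood J) (hd : 0 ≤ d) (hκ : 0 < κ)
  (hu_x : ∀ t, 0 < t → Continuous (u · t)) (hu' : ∀ x t, 0 < t → HasDerivAt (u x) (u' x t) t)
include hJ hd hκ hu_x hu'

/-- Compare `u x` with the solution of `f' = d C - (d + κ) f`. -/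
lemma le_of_hostile_on_segment {x t S C W : ℝ} (hS : 0 ≤ S) (ht : 0 < t - S) (hC : 0 ≤ C)
    (hW : u x (t - S) ≤ W) (hnbr : ∀ τ ∈ Icc (t - S) t, ∀ y, J (x - y) ≠ 0 → u y τ ≤ C)
    (hhost : ∀ τ ∈ Icc (t - S) t,
      u' x τ ≤ d * ((∫ y, J (x - y) * u y τ) - u x τ) - κ * u x τ) :
    u x t ≤ d / (d + κ) * C + exp (-((d + κ) * S)) * W := by
  have hμ : 0 < d + κ := by linarith
  have hrelax := sub_le_mul_exp_of_hasDerivAt (f := u x) (a := t - S) (b := t)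
    (μ := d + κ) (m := d / (d + κ) * C) (by linarith)
    (fun τ hτ => hu' x τ (ht.trans_le hτ.1)) fun τ hτ => by
      have hJu := hJ.integral_mul_le (hu_x τ (ht.trans_le hτ.1)) (hnbr τ hτ)
      rw [mul_sub, ← mul_assoc, mul_div_cancel₀ _ hμ.ne']
      nlinarith [hhost τ hτ]
  have hm : 0 ≤ d / (d + κ) * C := by positivity
  rw [sub_sub_cancel] at hrelax
  nlinarith [mul_le_mul_of_nonneg_right (show u x (t - S) - d / (d + κ) * C ≤ W by linarith)
    (exp_pos (-((d + κ) * S))).le]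

/-- Iterating `le_of_hostile_on_segment` over time steps `S`, the bound `ε / 2 + qⁿ W` with
`q = d / (d + κ)` holds at distance `n (|s| S + R)` behind the edge of the hostile region. -/
lemma exists_le_behind_of_hostile {s m₀ T₁ W : ℝ} (hT₁ : 0 < T₁) (hW₀ : 0 ≤ W)
    (hW : ∀ x t, 0 < t → u x t ≤ W)
    (hhost : ∀ x t, T₁ ≤ t → x ≤ s * t - m₀ →
      u' x t ≤ d * ((∫ y, J (x - y) * u y t) - u x t) - κ * u x t)
    {ε : ℝ} (hε : 0 < ε) : ∃ D, ∀ᶠ t in atTop, ∀ x, x ≤ s * t - D → u x t ≤ ε := by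
  obtain ⟨R, hR₀, hR⟩ := hJ.2.2.1.exists_eq_zero_of_lt_abs
  set q := d / (d + κ)
  have hq₀ : 0 ≤ q := by positivity
  have hq₁ : q < 1 := (div_lt_one (by linarith)).2 (by linarith)
  obtain ⟨S, hSε, hS₀⟩ := ((eventually_mul_exp_neg_le W (by linarith : 0 < d + κ)
    (by nlinarith : 0 < ε * (1 - q) / 2)).and (eventually_ge_atTop 0)).exists
  set R' := |s| * S + R
  have key : ∀ n : ℕ, ∀ t, T₁ + n * S ≤ t → ∀ x, x ≤ s * t - m₀ - n * R' →
      u x t ≤ ε / 2 + q ^ n * W := by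
    intro n
    induction n with
    | zero =>
      intro t ht x _
      nlinarith [hW x t (by simp only [Nat.cast_zero, zero_mul, add_zero] at ht; linarith)]
    | succ n ih =>
      intro t ht x hx
      push_cast at ht hx
      have hτ : ∀ τ ∈ Icc (t - S) t, T₁ + n * S ≤ τ ∧ s * t - |s| * S ≤ s * τ := fun τ hτ =>
        ⟨by linarith [hτ.1], by nlinarith [le_abs_self s, abs_nonneg s, hτ.1, hτ.2]⟩
      have hR'₀ : 0 ≤ R' := by positivity
      calc u x t ≤ q * (ε / 2 + q ^ n * W) + exp (-((d + κ) * S)) * W :=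
            le_of_hostile_on_segment hJ hd hκ hu_x hu' hS₀ (by nlinarith) (by positivity)
              (hW x _ (by nlinarith))
              (fun τ hτ' y hy => ih τ (hτ τ hτ').1 y (by
                have := not_lt.1 (mt (hR _) hy)
                nlinarith [(hτ τ hτ').2, neg_le_abs (x - y)]))
              fun τ hτ' => hhost x τ (by nlinarith [(hτ τ hτ').1])
                (by nlinarith [(hτ τ hτ').2])
        _ ≤ ε / 2 + q ^ (n + 1) * W := by rw [pow_succ]; nlinarith
  obtain ⟨n, hn⟩ := (((tendsto_pow_atTop_nhds_zero_of_lt_one hq₀ hq₁).mul_const W).eventually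
    (ge_mem_nhds (show 0 * W < ε / 2 by simpa using hε))).exists
  refine ⟨m₀ + n * R', (eventually_ge_atTop (T₁ + n * S)).mono fun t ht x hx => ?_⟩
  linarith [key n t ht x (by linarith)]

end Hostile

lemma exists_le_of_front_of_behind {u : ℝ → ℝ → ℝ} {A l c s : ℝ} (hA : 0 ≤ A) (hl : 0 < l)
    (hcs : c < s) (hfront : ∀ x t, 0 ≤ t → u x t ≤ A * exp (-(l * (x - c * t))))
    (hbehind : ∀ ε > 0, ∃ D, ∀ᶠ t in atTop, ∀ x, x ≤ s * t - D → u x t ≤ ε) :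
    ∀ ε > (0 : ℝ), ∃ T : ℝ, ∀ t ≥ T, ∀ x : ℝ, u x t ≤ ε := by
  intro ε hε
  set θ := (s - c) / 2 with hθ_def
  have hθ : 0 < θ := by linarith
  obtain ⟨D, hD⟩ := hbehind ε hε
  obtain ⟨T, hT⟩ := (hD.and ((eventually_mul_exp_neg_le A (mul_pos hl hθ) hε).and
    (((tendsto_id.const_mul_atTop hθ).eventually_ge_atTop D).and
      (eventually_ge_atTop 0)))).exists_forall_of_atTop
  refine ⟨T, fun t ht x => ?_⟩
  obtain ⟨hbehind, hexp, hθt, ht₀⟩ := hT t ht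
  rcases le_or_gt x ((c + θ) * t) with hx | hx
  · exact hbehind x (by simp only [id] at hθt; nlinarith)
  · calc u x t ≤ A * exp (-(l * (x - c * t))) := hfront x t ht₀
      _ ≤ A * exp (-(l * θ * t)) := mul_le_mul_of_nonneg_left (exp_le_exp.2 (by nlinarith)) hA
      _ ≤ ε := hexp

lemma extinction_of_minSpeed_lt {d r s W : ℝ} {J : ℝ → ℝ} {u u' : ℝ → ℝ → ℝ}
    (hJ : KernelGood J) (hd : 0 ≤ d) (hr : 0 ≤ r) (hs : minSpeed d r J < s)
    (hu_x : ∀ t, 0 < t → Continuous (u · t)) (hu_t : ∀ x, ContinuousOn (u x) (Ici 0))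
    (hu' : ∀ x t, 0 < t → HasDerivAt (u x) (u' x t) t)
    (hsub : ∀ x t, 0 < t → u' x t ≤ d * ((∫ y, J (x - y) * u y t) - u x t) + r * u x t)
    (hW : ∀ x t, 0 ≤ t → u x t ≤ W) (hsupp : HasCompactSupport (u · 0))
    (hbehind : ∀ ε > 0, ∃ D, ∀ᶠ t in atTop, ∀ x, x ≤ s * t - D → u x t ≤ ε) :
    ∀ ε > (0 : ℝ), ∃ T : ℝ, ∀ t ≥ T, ∀ x : ℝ, u x t ≤ ε := by
  obtain ⟨l, c, hl, hcs, hc⟩ := exists_lt_of_minSpeed_lt hJ hd hr hs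
  obtain ⟨A, hA, h₀⟩ := hsupp.exists_le_mul_exp_neg (fun x => hW x 0 le_rfl) hl.le
  exact exists_le_of_front_of_behind hA hl hcs
    (le_mul_exp_of_subsolution hJ hd hc hA hu_x hu_t hu' hsub hW h₀) hbehind

lemma ContinuousOn.continuousOn_Ici_of_uncurry {u : ℝ → ℝ → ℝ}
    (h : ContinuousOn (fun p : ℝ × ℝ => u p.1 p.2) (univ ×ˢ Ici 0)) (x : ℝ) :
    ContinuousOn (u x) (Ici 0) :=
  h.comp (continuous_const.prodMk continuous_id).continuousOn fun _ ht => ⟨mem_univ _, ht⟩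

lemma ContinuousOn.continuous_of_uncurry {u : ℝ → ℝ → ℝ}
    (h : ContinuousOn (fun p : ℝ × ℝ => u p.1 p.2) (univ ×ˢ Ici 0)) {t : ℝ} (ht : 0 < t) :
    Continuous (u · t) :=
  continuous_iff_continuousAt.2 fun x => ContinuousAt.comp (f := fun y : ℝ => (y, t)) (x := x)
    (h.continuousAt (prod_mem_nhds univ_mem (Ici_mem_nhds ht)))
    (continuous_id.prodMk continuous_const).continuousAt

lemma AlphaGood.le_one {α : ℝ → ℝ} (hα : AlphaGood α) (z : ℝ) : α z ≤ 1 :=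
  hα.2.1.ge_of_tendsto hα.2.2.2 z

lemma AlphaGood.exists_le_neg {α : ℝ → ℝ} (hα : AlphaGood α) :
    ∃ η > 0, ∃ z₀, ∀ z ≤ z₀, α z ≤ -η := by
  obtain ⟨L, hL, hαL⟩ := hα.2.2.1
  obtain ⟨z₀, hz₀⟩ := eventually_atBot.1 (hαL.eventually_le_const (by linarith : L < L / 2))
  exact ⟨-(L / 2), by linarith, z₀, fun z hz => by simpa using hz₀ z hz⟩

namespace IsSolPP

variable {d₁ d₂ r₁ r₂ a b s : ℝ} {J₁ J₂ α u₀ v₀ : ℝ → ℝ} {u v : ℝ → ℝ → ℝ}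
  (hsol : IsSolPP d₁ d₂ r₁ r₂ a b s J₁ J₂ α u₀ v₀ u v)
include hsol

lemma prey_small_behind (hd₁ : 0 ≤ d₁) (hr₁ : 0 < r₁) (ha : 0 ≤ a) (hJ₁ : KernelGood J₁)
    (hα : AlphaGood α) :
    ∀ ε > 0, ∃ D, ∀ᶠ t in atTop, ∀ x, x ≤ s * t - D → u x t ≤ ε := by
  obtain ⟨hCu, -, hu, hv, -, -, hu', -⟩ := hsol
  obtain ⟨η, hη, z₀, hz₀⟩ := hα.exists_le_neg
  intro ε hε
  refine exists_le_behind_of_hostile hJ₁ hd₁ (mul_pos hr₁ hη) (fun t => hCu.continuous_of_uncurry)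
    hu' (m₀ := -z₀) one_pos zero_le_one (fun x t ht => (hu x t ht.le).2)
    (fun x t ht hx => ?_) hε
  have ht₀ : 0 ≤ t := zero_le_one.trans ht
  nlinarith [hz₀ (x - s * t) (by linarith), hu x t ht₀, hv x t ht₀,
    mul_nonneg ha (hv x t ht₀).1, mul_nonneg hr₁.le (hu x t ht₀).1]

lemma predator_small_behind (hd₂ : 0 ≤ d₂) (hr₂ : 0 < r₂) (hb : 1 < b) (hJ₂ : KernelGood J₂)
    (hu_small : ∀ ε > 0, ∃ D, ∀ᶠ t in atTop, ∀ x, x ≤ s * t - D → u x t ≤ ε) :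
    ∀ ε > 0, ∃ D, ∀ᶠ t in atTop, ∀ x, x ≤ s * t - D → v x t ≤ ε := by
  obtain ⟨-, hCv, hu, hv, -, -, -, hv'⟩ := hsol
  obtain ⟨D, hD⟩ := hu_small (1 / (2 * b)) (by positivity)
  obtain ⟨T, hT⟩ := hD.exists_forall_of_atTop
  intro ε hε
  refine exists_le_behind_of_hostile hJ₂ hd₂ (half_pos hr₂) (fun t => hCv.continuous_of_uncurry)
    hv' (T₁ := max T 1) (m₀ := D) (by positivity) (by linarith) (fun x t ht => (hv x t ht.le).2)
    (fun x t ht hx => ?_) hε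
  have ht₀ : 0 ≤ t := by linarith [le_max_right T 1]
  have hbu : b * u x t ≤ 1 / 2 :=
    calc b * u x t ≤ b * (1 / (2 * b)) := by gcongr; exact hT t ((le_max_left T 1).trans ht) x hx
      _ = 1 / 2 := by field_simp
  nlinarith [hv x t ht₀, mul_nonneg hr₂.le (hv x t ht₀).1]

lemma prey_extinction (hd₁ : 0 ≤ d₁) (hr₁ : 0 < r₁) (ha : 0 ≤ a) (hJ₁ : KernelGood J₁)
    (hα : AlphaGood α) (hu₀ : HasCompactSupport u₀) (hs : minSpeed d₁ r₁ J₁ < s) :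
    ∀ ε > (0 : ℝ), ∃ T : ℝ, ∀ t ≥ T, ∀ x : ℝ, u x t ≤ ε := by
  have hbehind := hsol.prey_small_behind hd₁ hr₁ ha hJ₁ hα
  obtain ⟨hCu, -, hu, hv, hu0, -, hu', -⟩ := hsol
  refine extinction_of_minSpeed_lt hJ₁ hd₁ hr₁.le hs (fun t => hCu.continuous_of_uncurry)
    hCu.continuousOn_Ici_of_uncurry hu' (fun x t ht => ?_) (fun x t ht => (hu x t ht).2)
    (by simpa [hu0] using hu₀) hbehind
  nlinarith [hα.le_one (x - s * t), hu x t ht.le, hv x t ht.le,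
    mul_nonneg ha (hv x t ht.le).1, mul_nonneg hr₁.le (hu x t ht.le).1]

lemma predator_extinction (hd₁ : 0 ≤ d₁) (hd₂ : 0 ≤ d₂) (hr₁ : 0 < r₁) (hr₂ : 0 < r₂)
    (ha : 0 ≤ a) (hb : 1 < b) (hJ₁ : KernelGood J₁) (hJ₂ : KernelGood J₂) (hα : AlphaGood α)
    (hv₀ : HasCompactSupport v₀) (hs : minSpeed d₂ (r₂ * (b - 1)) J₂ < s) :
    ∀ ε > (0 : ℝ), ∃ T : ℝ, ∀ t ≥ T, ∀ x : ℝ, v x t ≤ ε := by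
  have hbehind := hsol.predator_small_behind hd₂ hr₂ hb hJ₂
    (hsol.prey_small_behind hd₁ hr₁ ha hJ₁ hα)
  obtain ⟨-, hCv, hu, hv, -, hv0, -, hv'⟩ := hsol
  refine extinction_of_minSpeed_lt hJ₂ hd₂ (by nlinarith) hs (fun t => hCv.continuous_of_uncurry)
    hCv.continuousOn_Ici_of_uncurry hv' (fun x t ht => ?_) (fun x t ht => (hv x t ht).2)
    (by simpa [hv0] using hv₀) hbehind
  nlinarith [hv x t ht.le, mul_nonneg hr₂.le (hv x t ht.le).1,
    mul_le_mul_of_nonneg_left (hu x t ht.le).2 (by linarith : 0 ≤ b)]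

end IsSolPP

theorem extinction_fast_climate_nonlocal_general
    (d₁ d₂ r₁ r₂ a b s : ℝ)
    (hd₁ : 0 < d₁) (hd₂ : 0 < d₂) (hr₁ : 0 < r₁) (hr₂ : 0 < r₂)
    (ha : 0 < a) (hb : 1 < b)
    (J₁ J₂ α : ℝ → ℝ)
    (hJ₁ : KernelGood J₁) (hJ₂ : KernelGood J₂) (hα : AlphaGood α)
    (u₀ v₀ : ℝ → ℝ)
    (hu₀supp : HasCompactSupport u₀)
    (hv₀supp : HasCompactSupport v₀)
    (u v : ℝ → ℝ → ℝ)
    (hsol : IsSolPP d₁ d₂ r₁ r₂ a b s J₁ J₂ α u₀ v₀ u v) :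
    (minSpeed d₁ r₁ J₁ < s →
      ∀ ε > (0:ℝ), ∃ T : ℝ, ∀ t ≥ T, ∀ x : ℝ, u x t ≤ ε) ∧
    (minSpeed d₂ (r₂ * (b - 1)) J₂ < s →
      ∀ ε > (0:ℝ), ∃ T : ℝ, ∀ t ≥ T, ∀ x : ℝ, v x t ≤ ε) :=
  ⟨hsol.prey_extinction hd₁.le hr₁ ha.le hJ₁ hα hu₀supp,
    hsol.predator_extinction hd₁.le hd₂.le hr₁ hr₂ ha.le hb hJ₁ hJ₂ hα hv₀supp⟩

/-- Theorem 4.1: extinction under fast climate change, nonlocal case. -/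
theorem extinction_fast_climate_nonlocal
    (d₁ d₂ r₁ r₂ a b s : ℝ)
    (hd₁ : 0 < d₁) (hd₂ : 0 < d₂) (hr₁ : 0 < r₁) (hr₂ : 0 < r₂)
    (ha : 0 < a) (hb : 1 < b) (hs : 0 < s)
    (J₁ J₂ α : ℝ → ℝ)
    (hJ₁ : KernelGood J₁) (hJ₂ : KernelGood J₂) (hα : AlphaGood α)
    (u₀ v₀ : ℝ → ℝ)
    (hu₀c : Continuous u₀) (hu₀b : ∀ x, 0 ≤ u₀ x ∧ u₀ x ≤ 1)
    (hu₀ne : ∃ x, u₀ x ≠ 0) (hu₀supp : HasCompactSupport u₀)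
    (hv₀c : Continuous v₀) (hv₀b : ∀ x, 0 ≤ v₀ x ∧ v₀ x ≤ b - 1)
    (hv₀ne : ∃ x, v₀ x ≠ 0) (hv₀supp : HasCompactSupport v₀)
    (u v : ℝ → ℝ → ℝ)
    (hsol : IsSolPP d₁ d₂ r₁ r₂ a b s J₁ J₂ α u₀ v₀ u v) :
    (minSpeed d₁ r₁ J₁ < s →
      ∀ ε > (0:ℝ), ∃ T : ℝ, ∀ t ≥ T, ∀ x : ℝ, u x t ≤ ε) ∧
    (minSpeed d₂ (r₂ * (b - 1)) J₂ < s →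
      ∀ ε > (0:ℝ), ∃ T : ℝ, ∀ t ≥ T, ∀ x : ℝ, v x t ≤ ε) :=
  extinction_fast_climate_nonlocal_general d₁ d₂ r₁ r₂ a b s hd₁ hd₂ hr₁ hr₂ ha hb J₁ J₂ α hJ₁ hJ₂
    hα u₀ v₀ hu₀supp hv₀supp u v hsol
end
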